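/- Let A₀, A₁, A₂ be ℤ-graded chain complexes of modules over the field 𝔽 = ℤ/2ℤ, with differentials ∂ᵢ of degree −1. Suppose given chain maps fᵢ : Aᵢ → A_{i+1} and module maps hᵢ : Aᵢ → A_{i+2} of degree +1 (all indices taken mod 3) such that, for each i ∈ {0,1,2}: (1) f_{i+1} ∘ fᵢ = ∂_{i+2} ∘ hᵢ + hᵢ ∘ ∂ᵢ (i.e. hᵢ is a null-homotopy of f_{i+1} ∘ fᵢ); and (2) the chain map f_{i+2} ∘ hᵢ + h_{i+1} ∘ fᵢ : Aᵢ → Aᵢ induces an isomorphism on homology in every degree. Then for every i mod 3 and every degree n, the image of the induced map Hₙ(fᵢ) : Hₙ(Aᵢ) → Hₙ(A_{i+1}) equals the kernel of Hₙ(f_{i+1}) : Hₙ(A_{i+1}) → Hₙ(A_{i+2}); that is, the maps induced by the fᵢ form a long exact sequence on homology. -/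
import Mathlib


/-- In a ℤ-graded chain complex `M` over `ℤ/2ℤ` with differential
`d n : M (n+1) → M n`, an element `x : M n` is a boundary if it lies in the
image of the differential. -/
def IsBoundary {M : ℤ → Type} [∀ n, AddCommGroup (M n)]
    [∀ n, Module (ZMod 2) (M n)]
    (d : ∀ n : ℤ, M (n + 1) →ₗ[ZMod 2] M n) (n : ℤ) (x : M n) : Prop :=
  ∃ w : M (n + 1), d n w = x

theorem char2_add_self {M : Type} [AddCommGroup M] [Module (ZMod 2) M] (a : M) :
    a + a = 0 := by
  have h : (2 : ZMod 2) • a = a + a := two_smul _ a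
  have h2 : (2 : ZMod 2) = 0 := by decide
  rw [h2, zero_smul] at h
  exact h.symm

theorem char2_two_zsmul {M : Type} [AddCommGroup M] [Module (ZMod 2) M] (a : M) :
    (2 : ℤ) • a = 0 := by rw [two_zsmul]; exact char2_add_self a

theorem aux_exact
    (A B C : ℤ → Type)
    [∀ n, AddCommGroup (A n)] [∀ n, Module (ZMod 2) (A n)]
    [∀ n, AddCommGroup (B n)] [∀ n, Module (ZMod 2) (B n)]
    [∀ n, AddCommGroup (C n)] [∀ n, Module (ZMod 2) (C n)]
    (dA : ∀ n : ℤ, A (n + 1) →ₗ[ZMod 2] A n)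
    (dB : ∀ n : ℤ, B (n + 1) →ₗ[ZMod 2] B n)
    (dC : ∀ n : ℤ, C (n + 1) →ₗ[ZMod 2] C n)
    (fAB : ∀ n : ℤ, A n →ₗ[ZMod 2] B n)
    (fBC : ∀ n : ℤ, B n →ₗ[ZMod 2] C n)
    (fCA : ∀ n : ℤ, C n →ₗ[ZMod 2] A n)
    (hfAB : ∀ n : ℤ, (dB n).comp (fAB (n + 1)) = (fAB n).comp (dA n))
    (hfBC : ∀ n : ℤ, (dC n).comp (fBC (n + 1)) = (fBC n).comp (dB n))
    (hfCA : ∀ n : ℤ, (dA n).comp (fCA (n + 1)) = (fCA n).comp (dC n))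
    (hA' : ∀ n : ℤ, A n →ₗ[ZMod 2] C (n + 1))
    (hB' : ∀ n : ℤ, B n →ₗ[ZMod 2] A (n + 1))
    (hC' : ∀ n : ℤ, C n →ₗ[ZMod 2] B (n + 1))
    (hhA : ∀ n : ℤ, (fBC (n + 1)).comp (fAB (n + 1)) =
      (dC (n + 1)).comp (hA' (n + 1)) + (hA' n).comp (dA n))
    (hhB : ∀ n : ℤ, (fCA (n + 1)).comp (fBC (n + 1)) =
      (dA (n + 1)).comp (hB' (n + 1)) + (hB' n).comp (dB n))
    (hhC : ∀ n : ℤ, (fAB (n + 1)).comp (fCA (n + 1)) =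
      (dB (n + 1)).comp (hC' (n + 1)) + (hC' n).comp (dC n))
    (hqBinj : ∀ (n : ℤ) (x : B (n + 1)), dB n x = 0 →
      IsBoundary dB (n + 1 + 1)
        (((fAB (n + 1 + 1)).comp (hB' (n + 1)) + (hC' (n + 1)).comp (fBC (n + 1))) x) →
      IsBoundary dB (n + 1) x)
    (hqAsurj : ∀ (n : ℤ) (y : A (n + 1 + 1)), dA (n + 1) y = 0 →
      ∃ x : A (n + 1), dA n x = 0 ∧
        IsBoundary dA (n + 1 + 1)
          (y + ((fCA (n + 1 + 1)).comp (hA' (n + 1)) + (hB' (n + 1)).comp (fAB (n + 1))) x))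
    (n : ℤ) (x : B (n + 1)) (hx : dB n x = 0) :
    IsBoundary dC (n + 1) (fBC (n + 1) x) ↔
      ∃ y : A (n + 1), dA n y = 0 ∧ IsBoundary dB (n + 1) (x + fAB (n + 1) y) := by
  constructor
  · rintro ⟨v, hv⟩
    have hy' : dA (n + 1) (hB' (n + 1) x + fCA (n + 1 + 1) v) = 0 := by
      have e1 := LinearMap.congr_fun (hhB n) x
      have e2 := LinearMap.congr_fun (hfCA (n + 1)) v
      simp only [LinearMap.comp_apply, LinearMap.add_apply] at e1 e2
      rw [hx, map_zero, add_zero] at e1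
      rw [map_add, e2, hv, ← e1]
      exact char2_add_self _
    obtain ⟨y, hy, w0, hw0⟩ := hqAsurj n _ hy'
    refine ⟨y, hy, hqBinj n (x + fAB (n + 1) y) ?_ ?_⟩
    · rw [map_add, hx, zero_add]
      have e := LinearMap.congr_fun (hfAB n) y
      simp only [LinearMap.comp_apply] at e
      rw [e, hy, map_zero]
    · refine ⟨fAB (n + 1 + 1 + 1) w0 + hC' (n + 1 + 1) v
        + hC' (n + 1 + 1) (hA' (n + 1) y), ?_⟩
      have e4 := LinearMap.congr_fun (hfAB (n + 1 + 1)) w0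
      have e1 := LinearMap.congr_fun (hhC (n + 1)) v
      have e2 := LinearMap.congr_fun (hhA n) y
      have e3 := LinearMap.congr_fun (hhC (n + 1)) (hA' (n + 1) y)
      simp only [LinearMap.comp_apply, LinearMap.add_apply] at e1 e2 e3 e4 hw0 ⊢
      rw [hy, map_zero, add_zero] at e2
      rw [hv] at e1
      rw [← e2] at e3
      rw [map_add, map_add, e4, hw0]
      simp only [map_add]
      rw [e1, e3]
      abel_nf
      simp only [char2_two_zsmul, add_zero, zero_add]
  · rintro ⟨y, hy, w, hw⟩
    refine ⟨fBC (n + 1 + 1) w + hA' (n + 1) y, ?_⟩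
    have e2 := LinearMap.congr_fun (hhA n) y
    have e5 := LinearMap.congr_fun (hfBC (n + 1)) w
    simp only [LinearMap.comp_apply, LinearMap.add_apply] at e2 e5
    rw [hy, map_zero, add_zero] at e2
    rw [map_add, e5, hw, map_add, e2, add_assoc, char2_add_self, add_zero]

/-- **The exact triangle detection lemma** (mod-3-cyclic version).
Let `A0, A1, A2` be ℤ-graded chain complexes over `𝔽 = ℤ/2ℤ` with degree `-1`
differentials `d0, d1, d2`, together with chain maps `f0 : A0 → A1`,
`f1 : A1 → A2`, `f2 : A2 → A0` and degree `+1` module maps `h0 : A0 → A2`,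
`h1 : A1 → A0`, `h2 : A2 → A1` such that, cyclically,
`f_{i+1} ∘ f_i = ∂ ∘ h_i + h_i ∘ ∂` (the null-homotopy condition), and each
`q_i = f_{i+2} ∘ h_i + h_{i+1} ∘ f_i : A_i → A_i` (a degree `+1` chain map)
induces an isomorphism on homology in every degree (stated element-wise as
injectivity and surjectivity on homology classes).  Then in every degree the
image of the map induced on homology by `f_i` equals the kernel of the map
induced by `f_{i+1}`: the `f_i` induce a long exact sequence on homology. -/
theorem exact_triangle_detection
    (A0 A1 A2 : ℤ → Type)
    [∀ n, AddCommGroup (A0 n)] [∀ n, Module (ZMod 2) (A0 n)]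
    [∀ n, AddCommGroup (A1 n)] [∀ n, Module (ZMod 2) (A1 n)]
    [∀ n, AddCommGroup (A2 n)] [∀ n, Module (ZMod 2) (A2 n)]
    -- differentials, of degree -1
    (d0 : ∀ n : ℤ, A0 (n + 1) →ₗ[ZMod 2] A0 n)
    (d1 : ∀ n : ℤ, A1 (n + 1) →ₗ[ZMod 2] A1 n)
    (d2 : ∀ n : ℤ, A2 (n + 1) →ₗ[ZMod 2] A2 n)
    (hd0 : ∀ n : ℤ, (d0 n).comp (d0 (n + 1)) = 0)
    (hd1 : ∀ n : ℤ, (d1 n).comp (d1 (n + 1)) = 0)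
    (hd2 : ∀ n : ℤ, (d2 n).comp (d2 (n + 1)) = 0)
    -- chain maps f_i : A_i → A_{i+1}
    (f0 : ∀ n : ℤ, A0 n →ₗ[ZMod 2] A1 n)
    (f1 : ∀ n : ℤ, A1 n →ₗ[ZMod 2] A2 n)
    (f2 : ∀ n : ℤ, A2 n →ₗ[ZMod 2] A0 n)
    (hf0 : ∀ n : ℤ, (d1 n).comp (f0 (n + 1)) = (f0 n).comp (d0 n))
    (hf1 : ∀ n : ℤ, (d2 n).comp (f1 (n + 1)) = (f1 n).comp (d1 n))
    (hf2 : ∀ n : ℤ, (d0 n).comp (f2 (n + 1)) = (f2 n).comp (d2 n))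
    -- degree +1 homotopies h_i : A_i → A_{i+2}
    (h0 : ∀ n : ℤ, A0 n →ₗ[ZMod 2] A2 (n + 1))
    (h1 : ∀ n : ℤ, A1 n →ₗ[ZMod 2] A0 (n + 1))
    (h2 : ∀ n : ℤ, A2 n →ₗ[ZMod 2] A1 (n + 1))
    -- (1) null-homotopy conditions: f_{i+1} ∘ f_i = ∂ ∘ h_i + h_i ∘ ∂
    (hh0 : ∀ n : ℤ, (f1 (n + 1)).comp (f0 (n + 1)) =
      (d2 (n + 1)).comp (h0 (n + 1)) + (h0 n).comp (d0 n))
    (hh1 : ∀ n : ℤ, (f2 (n + 1)).comp (f1 (n + 1)) =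
      (d0 (n + 1)).comp (h1 (n + 1)) + (h1 n).comp (d1 n))
    (hh2 : ∀ n : ℤ, (f0 (n + 1)).comp (f2 (n + 1)) =
      (d1 (n + 1)).comp (h2 (n + 1)) + (h2 n).comp (d2 n))
    -- (2) each q_i = f_{i+2} ∘ h_i + h_{i+1} ∘ f_i induces an injection on homology ...
    (hq0inj : ∀ (n : ℤ) (x : A0 (n + 1)), d0 n x = 0 →
      IsBoundary d0 (n + 1 + 1)
        (((f2 (n + 1 + 1)).comp (h0 (n + 1)) + (h1 (n + 1)).comp (f0 (n + 1))) x) →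
      IsBoundary d0 (n + 1) x)
    (hq1inj : ∀ (n : ℤ) (x : A1 (n + 1)), d1 n x = 0 →
      IsBoundary d1 (n + 1 + 1)
        (((f0 (n + 1 + 1)).comp (h1 (n + 1)) + (h2 (n + 1)).comp (f1 (n + 1))) x) →
      IsBoundary d1 (n + 1) x)
    (hq2inj : ∀ (n : ℤ) (x : A2 (n + 1)), d2 n x = 0 →
      IsBoundary d2 (n + 1 + 1)
        (((f1 (n + 1 + 1)).comp (h2 (n + 1)) + (h0 (n + 1)).comp (f2 (n + 1))) x) →
      IsBoundary d2 (n + 1) x)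
    -- ... and a surjection on homology
    (hq0surj : ∀ (n : ℤ) (y : A0 (n + 1 + 1)), d0 (n + 1) y = 0 →
      ∃ x : A0 (n + 1), d0 n x = 0 ∧
        IsBoundary d0 (n + 1 + 1)
          (y + ((f2 (n + 1 + 1)).comp (h0 (n + 1)) + (h1 (n + 1)).comp (f0 (n + 1))) x))
    (hq1surj : ∀ (n : ℤ) (y : A1 (n + 1 + 1)), d1 (n + 1) y = 0 →
      ∃ x : A1 (n + 1), d1 n x = 0 ∧
        IsBoundary d1 (n + 1 + 1)
          (y + ((f0 (n + 1 + 1)).comp (h1 (n + 1)) + (h2 (n + 1)).comp (f1 (n + 1))) x))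
    (hq2surj : ∀ (n : ℤ) (y : A2 (n + 1 + 1)), d2 (n + 1) y = 0 →
      ∃ x : A2 (n + 1), d2 n x = 0 ∧
        IsBoundary d2 (n + 1 + 1)
          (y + ((f1 (n + 1 + 1)).comp (h2 (n + 1)) + (h0 (n + 1)).comp (f2 (n + 1))) x)) :
    -- Conclusion: exactness of the induced maps on homology, at every place and
    -- in every degree: image of H(f_i) = kernel of H(f_{i+1}).
    (∀ (n : ℤ) (x : A1 (n + 1)), d1 n x = 0 →
      (IsBoundary d2 (n + 1) (f1 (n + 1) x) ↔
        ∃ y : A0 (n + 1), d0 n y = 0 ∧ IsBoundary d1 (n + 1) (x + f0 (n + 1) y))) ∧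
    (∀ (n : ℤ) (x : A2 (n + 1)), d2 n x = 0 →
      (IsBoundary d0 (n + 1) (f2 (n + 1) x) ↔
        ∃ y : A1 (n + 1), d1 n y = 0 ∧ IsBoundary d2 (n + 1) (x + f1 (n + 1) y))) ∧
    (∀ (n : ℤ) (x : A0 (n + 1)), d0 n x = 0 →
      (IsBoundary d1 (n + 1) (f0 (n + 1) x) ↔
        ∃ y : A2 (n + 1), d2 n y = 0 ∧ IsBoundary d0 (n + 1) (x + f2 (n + 1) y))) := by
  exact ⟨fun n x hx => aux_exact A0 A1 A2 d0 d1 d2 f0 f1 f2 hf0 hf1 hf2 h0 h1 h2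
      hh0 hh1 hh2 hq1inj hq0surj n x hx,
    fun n x hx => aux_exact A1 A2 A0 d1 d2 d0 f1 f2 f0 hf1 hf2 hf0 h1 h2 h0
      hh1 hh2 hh0 hq2inj hq1surj n x hx,
    fun n x hx => aux_exact A2 A0 A1 d2 d0 d1 f2 f0 f1 hf2 hf0 hf1 h2 h0 h1
      hh2 hh0 hh1 hq0inj hq2surj n x hx⟩
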